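/- arXiv:0710.4784 — 2 statements merged into one kernel-verified Lean document; each statement's English description precedes it below -/
import Mathlib

section
/- Let A0, A1, C0, C1 be smooth real functions on an open connected set U ⊆ ℝ² satisfying A0_y = A1_x, 12A1_x + 3A0·A1 − 4C1 = 0, and 32C0_y + 12A0_x·A1 − 16C1_x + 3A0²·A1 − 4A0·C1 = 0 on U. Then ∂/∂y (8C0 − 3A0² − 12A0_x) = 0 on U; that is, the right-hand side of the Riccati equation 40χ' − 20χ² = 8C0 − 3A0² − 12A0_x arising in the linearization of the first candidate equation is a function of x alone. -/
open Set

/-- Partial derivative with respect to the first variable. -/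
noncomputable def px (f : ℝ → ℝ → ℝ) : ℝ → ℝ → ℝ := fun x y => deriv (fun s => f s y) x

/-- Partial derivative with respect to the second variable. -/
noncomputable def py (f : ℝ → ℝ → ℝ) : ℝ → ℝ → ℝ := fun x y => deriv (fun s => f x s) y

/-- Smoothness of a function of two real variables on a set. -/
def Smooth2On (f : ℝ → ℝ → ℝ) (U : Set (ℝ × ℝ)) : Prop :=
  ContDiffOn ℝ (⊤ : ℕ∞) (fun p : ℝ × ℝ => f p.1 p.2) U

/-!
Solving (iv) for `C1` and substituting into (v), together with (iv) differentiated in `x`,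
gives `8 C0_y = 12 A1_xx + 6 A0 A1_x`. By (i) and the symmetry of second derivatives,
`A0_xy = A0_yx = A1_xx` and `A0 A0_y = A0 A1_x`, so
`8 C0_y - 6 A0 A0_y - 12 A0_xy` vanishes.
-/

open Filter Topology Function

section Slices

variable {E : Type*} [NormedAddCommGroup E] [NormedSpace ℝ E] {F : ℝ × ℝ → E} {x y : ℝ}

theorem hasDerivAt_slice_fst (h : DifferentiableAt ℝ F (x, y)) :
    HasDerivAt (fun s => F (s, y)) (fderiv ℝ F (x, y) (1, 0)) x :=
  h.hasFDerivAt.comp_hasDerivAt x ((hasDerivAt_id x).prodMk (hasDerivAt_const x y))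

theorem hasDerivAt_slice_snd (h : DifferentiableAt ℝ F (x, y)) :
    HasDerivAt (fun t => F (x, t)) (fderiv ℝ F (x, y) (0, 1)) y :=
  h.hasFDerivAt.comp_hasDerivAt y ((hasDerivAt_const y x).prodMk (hasDerivAt_id y))

end Slices

section Partials

variable {f g : ℝ → ℝ → ℝ} {U : Set (ℝ × ℝ)} {x y : ℝ}

theorem eventually_mem_slice_fst (hU : IsOpen U) (hp : (x, y) ∈ U) :
    ∀ᶠ s in 𝓝 x, (s, y) ∈ U :=
  (hU.preimage (continuous_id.prodMk continuous_const)).mem_nhds hp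

theorem eventually_mem_slice_snd (hU : IsOpen U) (hp : (x, y) ∈ U) :
    ∀ᶠ t in 𝓝 y, (x, t) ∈ U :=
  (hU.preimage (continuous_const.prodMk continuous_id)).mem_nhds hp

theorem px_congr (hU : IsOpen U) (h : ∀ x y, (x, y) ∈ U → f x y = g x y) (hp : (x, y) ∈ U) :
    px f x y = px g x y :=
  EventuallyEq.deriv_eq (f₁ := fun s => f s y)
    ((eventually_mem_slice_fst hU hp).mono fun s hs => h s y hs)

theorem px_eq_fderiv (h : DifferentiableAt ℝ (uncurry f) (x, y)) :
    px f x y = fderiv ℝ (uncurry f) (x, y) (1, 0) :=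
  (hasDerivAt_slice_fst h).deriv

theorem py_eq_fderiv (h : DifferentiableAt ℝ (uncurry f) (x, y)) :
    py f x y = fderiv ℝ (uncurry f) (x, y) (0, 1) :=
  (hasDerivAt_slice_snd h).deriv

end Partials

namespace Smooth2On

variable {f : ℝ → ℝ → ℝ} {U : Set (ℝ × ℝ)} {x y : ℝ}

theorem contDiffAt (hf : Smooth2On f U) (hU : IsOpen U) (hp : (x, y) ∈ U) :
    ContDiffAt ℝ (⊤ : ℕ∞) (uncurry f) (x, y) :=
  ContDiffOn.contDiffAt hf (hU.mem_nhds hp)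

theorem differentiableAt (hf : Smooth2On f U) (hU : IsOpen U) (hp : (x, y) ∈ U) :
    DifferentiableAt ℝ (uncurry f) (x, y) :=
  (hf.contDiffAt hU hp).differentiableAt (by simp)

theorem hasDerivAt_px (hf : Smooth2On f U) (hU : IsOpen U) (hp : (x, y) ∈ U) :
    HasDerivAt (fun s => f s y) (px f x y) x := by
  rw [px_eq_fderiv (hf.differentiableAt hU hp)]
  exact hasDerivAt_slice_fst (F := uncurry f) (hf.differentiableAt hU hp)

theorem hasDerivAt_py (hf : Smooth2On f U) (hU : IsOpen U) (hp : (x, y) ∈ U) :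
    HasDerivAt (fun t => f x t) (py f x y) y := by
  rw [py_eq_fderiv (hf.differentiableAt hU hp)]
  exact hasDerivAt_slice_snd (F := uncurry f) (hf.differentiableAt hU hp)

theorem contDiffOn_fderiv_apply (hf : Smooth2On f U) (hU : IsOpen U) (v : ℝ × ℝ) :
    ContDiffOn ℝ (⊤ : ℕ∞) (fun p => fderiv ℝ (uncurry f) p v) U :=
  (ContDiffOn.fderiv_of_isOpen hf hU (by simp)).clm_apply contDiffOn_const

theorem py_px (hf : Smooth2On f U) (hU : IsOpen U) (hp : (x, y) ∈ U) :
    py (px f) x y = px (py f) x y := by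
  have hf2 : DifferentiableAt ℝ (fderiv ℝ (uncurry f)) (x, y) :=
    ((hf.contDiffAt hU hp).fderiv_right (m := 1) (WithTop.coe_le_coe.2 le_top)).differentiableAt
      one_ne_zero
  have hyx : py (px f) x y = fderiv ℝ (fderiv ℝ (uncurry f)) (x, y) (0, 1) (1, 0) := by
    have hslice : HasDerivAt (fun t => fderiv ℝ (uncurry f) (x, t) (1, 0))
        (fderiv ℝ (fderiv ℝ (uncurry f)) (x, y) (0, 1) (1, 0)) y := by
      simpa using (hasDerivAt_slice_snd hf2).clm_apply (hasDerivAt_const y ((1 : ℝ), (0 : ℝ)))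
    rw [← hslice.deriv]
    exact EventuallyEq.deriv_eq ((eventually_mem_slice_snd hU hp).mono fun t ht =>
      px_eq_fderiv (hf.differentiableAt hU ht))
  have hxy : px (py f) x y = fderiv ℝ (fderiv ℝ (uncurry f)) (x, y) (1, 0) (0, 1) := by
    have hslice : HasDerivAt (fun s => fderiv ℝ (uncurry f) (s, y) (0, 1))
        (fderiv ℝ (fderiv ℝ (uncurry f)) (x, y) (1, 0) (0, 1)) x := by
      simpa using (hasDerivAt_slice_fst hf2).clm_apply (hasDerivAt_const x ((0 : ℝ), (1 : ℝ)))
    rw [← hslice.deriv]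
    exact EventuallyEq.deriv_eq ((eventually_mem_slice_fst hU hp).mono fun s hs =>
      py_eq_fderiv (hf.differentiableAt hU hs))
  rw [hyx, hxy]
  exact (hf.contDiffAt hU hp).isSymmSndFDerivAt
    (by simpa using WithTop.coe_le_coe.2 (le_top : (2 : ℕ∞) ≤ ⊤)) _ _

theorem px (hf : Smooth2On f U) (hU : IsOpen U) : Smooth2On (px f) U :=
  (hf.contDiffOn_fderiv_apply hU (1, 0)).congr fun _ hp =>
    px_eq_fderiv (hf.differentiableAt hU hp)

end Smooth2On

theorem riccati_rhs_independent_of_y_general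
    (U : Set (ℝ × ℝ)) (hU : IsOpen U)
    (A0 A1 C0 C1 : ℝ → ℝ → ℝ)
    (hA0 : Smooth2On A0 U) (hA1 : Smooth2On A1 U)
    (hC0 : Smooth2On C0 U) (hC1 : Smooth2On C1 U)
    (hi : ∀ x y, (x, y) ∈ U → py A0 x y = px A1 x y)
    (hiv : ∀ x y, (x, y) ∈ U →
      12 * px A1 x y + 3 * A0 x y * A1 x y - 4 * C1 x y = 0)
    (hv : ∀ x y, (x, y) ∈ U →
      32 * py C0 x y + 12 * px A0 x y * A1 x y - 16 * px C1 x y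
        + 3 * A0 x y ^ 2 * A1 x y - 4 * A0 x y * C1 x y = 0) :
    ∀ x y, (x, y) ∈ U →
      py (fun s t => 8 * C0 s t - 3 * A0 s t ^ 2 - 12 * px A0 s t) x y = 0 := by
  intro x y hp
  have hiv_slice : HasDerivAt (fun s => 12 * px A1 s y + 3 * (A0 s y * A1 s y) - 4 * C1 s y)
      (12 * px (px A1) x y + 3 * (px A0 x y * A1 x y + A0 x y * px A1 x y) - 4 * px C1 x y) x :=
    ((((hA1.px hU).hasDerivAt_px hU hp).const_mul 12).fun_add
        (((hA0.hasDerivAt_px hU hp).fun_mul (hA1.hasDerivAt_px hU hp)).const_mul 3)).fun_sub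
      ((hC1.hasDerivAt_px hU hp).const_mul 4)
  have hiv_x : 12 * px (px A1) x y + 3 * (px A0 x y * A1 x y + A0 x y * px A1 x y)
      - 4 * px C1 x y = 0 :=
    hiv_slice.unique ((hasDerivAt_const x 0).congr_of_eventuallyEq
      ((eventually_mem_slice_fst hU hp).mono fun s hs => by linear_combination hiv s y hs))
  have hmixed : py (px A0) x y = px (px A1) x y :=
    (hA0.py_px hU hp).trans (px_congr hU hi hp)
  have hrhs : HasDerivAt (fun t => 8 * C0 x t - 3 * A0 x t ^ 2 - 12 * px A0 x t)
      (8 * py C0 x y - 3 * (2 * A0 x y * py A0 x y) - 12 * py (px A0) x y) y := by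
    simpa using (((hC0.hasDerivAt_py hU hp).const_mul 8).fun_sub
      (((hA0.hasDerivAt_py hU hp).fun_pow 2).const_mul 3)).fun_sub
      (((hA0.px hU).hasDerivAt_py hU hp).const_mul 12)
  calc py (fun s t => 8 * C0 s t - 3 * A0 s t ^ 2 - 12 * px A0 s t) x y
      = 8 * py C0 x y - 3 * (2 * A0 x y * py A0 x y) - 12 * py (px A0) x y := hrhs.deriv
    _ = 0 := by
      linear_combination (1 / 4) * hv x y hp - hiv_x - (A0 x y / 4) * hiv x y hp
        - 6 * A0 x y * hi x y hp - 12 * hmixed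

/-- under conditions (i), (iv), (v) the right-hand side
`8C0 − 3A0² − 12A0_x` of the Riccati equation is a function of `x` alone,
i.e. its `y`-derivative vanishes on `U`. -/
theorem riccati_rhs_independent_of_y
    (U : Set (ℝ × ℝ)) (hU : IsOpen U) (hUconn : IsConnected U)
    (A0 A1 C0 C1 : ℝ → ℝ → ℝ)
    (hA0 : Smooth2On A0 U) (hA1 : Smooth2On A1 U)
    (hC0 : Smooth2On C0 U) (hC1 : Smooth2On C1 U)
    (hi : ∀ x y, (x, y) ∈ U → py A0 x y = px A1 x y)
    (hiv : ∀ x y, (x, y) ∈ U →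
      12 * px A1 x y + 3 * A0 x y * A1 x y - 4 * C1 x y = 0)
    (hv : ∀ x y, (x, y) ∈ U →
      32 * py C0 x y + 12 * px A0 x y * A1 x y - 16 * px C1 x y
        + 3 * A0 x y ^ 2 * A1 x y - 4 * A0 x y * C1 x y = 0) :
    ∀ x y, (x, y) ∈ U →
      py (fun s t => 8 * C0 s t - 3 * A0 s t ^ 2 - 12 * px A0 s t) x y = 0 :=
  riccati_rhs_independent_of_y_general U hU A0 A1 C0 C1 hA0 hA1 hC0 hC1 hi hiv hv
end

section
/- Every linear fourth-order ordinary differential equation can be locally brought to Laguerre form, in which the two terms of orders next below the highest are absent: let c0, c1, c2, c3 be smooth real functions on an open interval I. Then for each x0 ∈ I there exist an open subinterval I0 ∋ x0, smooth functions φ and μ on I0 with φ' > 0 and μ nonvanishing, and smooth functions α, β, such that whenever y is a solution of y'''' + c3·y''' + c2·y'' + c1·y' + c0·y = 0 on I0, the function u defined by u(φ(x)) = μ(x)·y(x) satisfies u''''(t) + α(t)·u'(t) + β(t)·u(t) = 0. -/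
/-!
Substituting `y = ν · (u ∘ φ)`, the Leibniz rule and the Faà di Bruno formula turn
`y'''' + c₃y''' + c₂y'' + c₁y' + c₀y` into `∑ₖ Tₖ(x) u⁽ᵏ⁾(φ x)` with `T₄ = ν φ'⁴`.
The condition `T₃ = 0` forces `ν = K φ'^(-3/2)` with `K = exp (-∫ c₃ / 4)`. Writing `φ' = w⁻²`,
so that `ν = K w³`, the condition `T₂ = 0` becomes the linear equation `w'' = q w` with
`q = (12 c₃' + 3 c₃² - 8 c₂) / 80`, which has a positive solution near `x₀` by Picard–Lindelöf.
Then `α = T₁ / T₄` and `β = T₀ / T₄`, transported along the inverse of `φ`, and `μ = ν⁻¹`.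
-/

open Set Filter Topology Finset
open scoped ContDiff

theorem ContDiffOn.iteratedDeriv_of_isOpen {s : Set ℝ} (hs : IsOpen s) {f : ℝ → ℝ}
    {n m : WithTop ℕ∞} (hf : ContDiffOn ℝ n f s) (k : ℕ) (hk : m + k ≤ n) :
    ContDiffOn ℝ m (iteratedDeriv k f) s := by
  induction k generalizing m with
  | zero => simpa using hf.of_le (by simpa using hk)
  | succ k ih =>
    rw [iteratedDeriv_succ]
    refine (ih (m := m + 1) ?_).deriv_of_isOpen hs le_rfl
    rwa [add_assoc, add_comm 1, ← Nat.cast_one, ← Nat.cast_add]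

theorem ContDiffOn.hasDerivAt_iteratedDeriv {s : Set ℝ} (hs : IsOpen s) {f : ℝ → ℝ}
    {n : WithTop ℕ∞} (hf : ContDiffOn ℝ n f s) {k : ℕ} (hk : (k : WithTop ℕ∞) < n) {x : ℝ}
    (hx : x ∈ s) : HasDerivAt (iteratedDeriv k f) (iteratedDeriv (k + 1) f x) x := by
  rw [iteratedDeriv_succ]
  have hk' : 1 + (k : WithTop ℕ∞) ≤ n := by
    rw [add_comm]; exact ENat.add_one_natCast_le_withTop_of_lt hk
  exact ((hf.iteratedDeriv_of_isOpen hs k hk').differentiableOn one_ne_zero x hx).differentiableAt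
    (hs.mem_nhds hx) |>.hasDerivAt

theorem iteratedDeriv_succ_eq_of_eqOn {s : Set ℝ} (hs : IsOpen s) {f F : ℝ → ℝ} {k : ℕ}
    (hF : EqOn (iteratedDeriv k f) F s) {x F' : ℝ} (hx : x ∈ s) (h : HasDerivAt F F' x) :
    iteratedDeriv (k + 1) f x = F' := by
  rw [iteratedDeriv_succ]
  exact (h.congr_of_eventuallyEq (eventually_of_mem (hs.mem_nhds hx) hF)).deriv

theorem ContDiffOn.exists_hasDerivAt {s : Set ℝ} (hs : IsOpen s) (hc : s.OrdConnected)
    {f : ℝ → ℝ} (hf : ContDiffOn ℝ ∞ f s) :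
    ∃ F : ℝ → ℝ, ContDiffOn ℝ ∞ F s ∧ ∀ x ∈ s, HasDerivAt F (f x) x := by
  rcases s.eq_empty_or_nonempty with rfl | ⟨a, ha⟩
  · exact ⟨0, contDiffOn_empty, by simp⟩
  have hF : ∀ x ∈ s, HasDerivAt (fun t ↦ ∫ u in a..t, f u) (f x) x := fun x hx ↦
    intervalIntegral.integral_hasDerivAt_right
      (hf.continuousOn.mono (hc.uIcc_subset ha hx)).intervalIntegrable
      (hf.continuousOn.stronglyMeasurableAtFilter hs x hx)
      (hf.continuousOn.continuousAt (hs.mem_nhds hx))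
  refine ⟨_, ?_, hF⟩
  rw [contDiffOn_infty_iff_deriv_of_isOpen hs]
  exact ⟨fun x hx ↦ (hF x hx).differentiableAt.differentiableWithinAt,
    hf.congr fun x hx ↦ (hF x hx).deriv⟩

theorem ContDiffOn.contDiffOn_invFunOn_image {s : Set ℝ} (hs : IsOpen s) {φ : ℝ → ℝ}
    {n : WithTop ℕ∞} (hn : n ≠ 0) (hφ : ContDiffOn ℝ n φ s) (hinj : InjOn φ s)
    (hd : ∀ x ∈ s, deriv φ x ≠ 0) : ContDiffOn ℝ n (Function.invFunOn φ s) (φ '' s) := by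
  rintro _ ⟨x, hx, rfl⟩
  have hφx := hφ.contDiffAt (hs.mem_nhds hx)
  have hD := (hφx.differentiableAt hn).hasDerivAt.hasFDerivAt_equiv (hd x hx)
  have hleft : ∀ᶠ y in 𝓝 x, Function.invFunOn φ s (φ y) = y :=
    eventually_of_mem (hs.mem_nhds hx) fun _ hy ↦ hinj.leftInvOn_invFunOn hy
  exact ((hφx.to_localInverse hD hn).congr_of_eventuallyEq
    ((hφx.hasStrictFDerivAt' hD hn).localInverse_unique hleft)).contDiffWithinAt

theorem exists_eventually_pos_hasDerivAt_linearODE2 {q : ℝ → ℝ} {x0 : ℝ}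
    (hq : ContDiffAt ℝ 1 q x0) :
    ∃ w w' : ℝ → ℝ, ∀ᶠ x in 𝓝 x0,
      0 < w x ∧ HasDerivAt w (w' x) x ∧ HasDerivAt w' (q x * w x) x := by
  -- The system `(w, w')' = (w', q t w)` is made autonomous by adjoining `t` as a coordinate.
  set V : ℝ × ℝ × ℝ → ℝ × ℝ × ℝ := fun z ↦ (1, z.2.2, q z.1 * z.2.1)
  have hV : ContDiffAt ℝ 1 V (x0, 1, 0) := by
    refine contDiffAt_const.prodMk (contDiffAt_snd.snd.prodMk ?_)
    exact (hq.comp _ contDiffAt_fst).mul contDiffAt_snd.fst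
  obtain ⟨z, hz0, ε, hε, hz⟩ :=
    hV.exists_forall_mem_closedBall_exists_eq_forall_mem_Ioo_hasDerivAt₀ x0
  set S := Ioo (x0 - ε) (x0 + ε)
  have hz1 : ∀ t ∈ S, HasDerivAt (fun t ↦ (z t).1) 1 t := fun t ht ↦ by
    simpa [V, Function.comp_def] using hasFDerivAt_fst.comp_hasDerivAt t (hz t ht)
  have hz2 : ∀ t ∈ S, HasDerivAt (fun t ↦ (z t).2.1) (z t).2.2 t := fun t ht ↦ by
    simpa [V, Function.comp_def] using
      hasFDerivAt_fst.comp_hasDerivAt t (hasFDerivAt_snd.comp_hasDerivAt t (hz t ht))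
  have hz3 : ∀ t ∈ S, HasDerivAt (fun t ↦ (z t).2.2) (q (z t).1 * (z t).2.1) t := fun t ht ↦ by
    simpa [V, Function.comp_def] using
      hasFDerivAt_snd.comp_hasDerivAt t (hasFDerivAt_snd.comp_hasDerivAt t (hz t ht))
  have hx0 : x0 ∈ S := ⟨by linarith, by linarith⟩
  have htime : EqOn (fun t ↦ (z t).1) id S :=
    isOpen_Ioo.eqOn_of_deriv_eq isPreconnected_Ioo
      (fun t ht ↦ (hz1 t ht).differentiableAt.differentiableWithinAt)
      differentiableOn_id (fun t ht ↦ by simp [(hz1 t ht).deriv]) hx0 (by simp [hz0])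
  have hpos : ∀ᶠ t in 𝓝 x0, 0 < (z t).2.1 :=
    continuousAt_const.eventually_lt (hz2 x0 hx0).continuousAt (by simp [hz0])
  refine ⟨fun t ↦ (z t).2.1, fun t ↦ (z t).2.2, ?_⟩
  filter_upwards [hpos, isOpen_Ioo.mem_nhds hx0] with t ht hmem
  have hzt : (z t).1 = t := htime hmem
  exact ⟨ht, hz2 t hmem, by simpa only [hzt] using hz3 t hmem⟩

theorem contDiffOn_of_hasDerivAt_linearODE2 {s : Set ℝ} (hs : IsOpen s) {w w' q : ℝ → ℝ}
    (hq : ContDiffOn ℝ ∞ q s) (hw : ∀ x ∈ s, HasDerivAt w (w' x) x)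
    (hw' : ∀ x ∈ s, HasDerivAt w' (q x * w x) x) : ContDiffOn ℝ ∞ w s := by
  suffices ∀ n : ℕ, ContDiffOn ℝ n w s ∧ ContDiffOn ℝ n w' s from
    contDiffOn_infty.mpr fun n ↦ (this n).1
  intro n
  induction n with
  | zero =>
    simp only [Nat.cast_zero, contDiffOn_zero]
    exact ⟨fun x hx ↦ (hw x hx).continuousAt.continuousWithinAt,
      fun x hx ↦ (hw' x hx).continuousAt.continuousWithinAt⟩
  | succ n ih =>
    simp only [Nat.cast_add, Nat.cast_one, contDiffOn_succ_iff_deriv_of_isOpen hs]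
    refine ⟨⟨fun x hx ↦ (hw x hx).differentiableAt.differentiableWithinAt, by simp,
      ih.2.congr fun x hx ↦ (hw x hx).deriv⟩,
      ⟨fun x hx ↦ (hw' x hx).differentiableAt.differentiableWithinAt, by simp,
      ((hq.of_le (mod_cast le_top)).mul ih.1).congr fun x hx ↦ (hw' x hx).deriv⟩⟩

noncomputable def linDiffOp (n : ℕ) (a : ℕ → ℝ) (f : ℝ → ℝ) (x : ℝ) : ℝ :=
  ∑ k ∈ range (n + 1), a k * iteratedDeriv k f x

/-- Terms with `k < j` vanish because `k.choose j = 0`, so the truncated `k - j` is harmless. -/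
def mulCoeff (n : ℕ) (a m : ℕ → ℝ) (j : ℕ) : ℝ :=
  ∑ k ∈ range (n + 1), k.choose j * a k * m (k - j)

theorem linDiffOp_mul {n : ℕ} (a : ℕ → ℝ) {z ν : ℝ → ℝ} {x : ℝ} (hz : ContDiffAt ℝ n z x)
    (hν : ContDiffAt ℝ n ν x) :
    linDiffOp n a (z * ν) x = linDiffOp n (mulCoeff n a fun k ↦ iteratedDeriv k ν x) z x := by
  have leibniz : ∀ k ∈ range (n + 1), iteratedDeriv k (z * ν) x =
      ∑ j ∈ range (n + 1), k.choose j * iteratedDeriv j z x * iteratedDeriv (k - j) ν x := by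
    intro k hk
    have hkn : (k : WithTop ℕ∞) ≤ n := by exact_mod_cast mem_range_succ_iff.mp hk
    rw [iteratedDeriv_mul (hz.of_le hkn) (hν.of_le hkn)]
    refine sum_subset (range_subset_range.mpr (by simpa using hk)) fun j _ hj ↦ ?_
    simp [Nat.choose_eq_zero_of_lt (by simpa using hj : k < j)]
  simp only [linDiffOp, mulCoeff, sum_congr rfl fun k hk ↦ congrArg (a k * ·) (leibniz k hk),
    mul_sum, sum_mul]
  rw [sum_comm]
  exact sum_congr rfl fun j _ ↦ sum_congr rfl fun k _ ↦ by ring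

/-- `compCoeff E p j = ∑ₖ E k * B_{k,j}(p 1, p 2, …)` for `k ≤ 4`, with the partial Bell
polynomials `B_{k,j}` of Faà di Bruno's formula. -/
def compCoeff (E p : ℕ → ℝ) : ℕ → ℝ
  | 0 => E 0
  | 1 => E 1 * p 1 + E 2 * p 2 + E 3 * p 3 + E 4 * p 4
  | 2 => E 2 * p 1 ^ 2 + 3 * E 3 * p 1 * p 2 + E 4 * (4 * p 1 * p 3 + 3 * p 2 ^ 2)
  | 3 => E 3 * p 1 ^ 3 + 6 * E 4 * p 1 ^ 2 * p 2
  | 4 => E 4 * p 1 ^ 4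
  | _ => 0

theorem linDiffOp_comp {J W : Set ℝ} (hJ : IsOpen J) (hW : IsOpen W) {φ u : ℝ → ℝ}
    (hφ : ContDiffOn ℝ 4 φ J) (hu : ContDiffOn ℝ 4 u W) (hφW : MapsTo φ J W) (E : ℕ → ℝ)
    {x : ℝ} (hx : x ∈ J) :
    linDiffOp 4 E (u ∘ φ) x = linDiffOp 4 (compCoeff E fun k ↦ iteratedDeriv k φ x) u (φ x) := by
  set p := fun k ↦ iteratedDeriv k φ
  have hφk : ∀ k < 4, ∀ x ∈ J, HasDerivAt (p k) (p (k + 1) x) x := fun k hk x hx ↦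
    hφ.hasDerivAt_iteratedDeriv hJ (by exact_mod_cast hk) hx
  have huk : ∀ k < 4, ∀ x ∈ J, HasDerivAt (fun x ↦ iteratedDeriv k u (φ x))
      (iteratedDeriv (k + 1) u (φ x) * p 1 x) x := fun k hk x hx ↦
    (hu.hasDerivAt_iteratedDeriv hW (by exact_mod_cast hk) (hφW hx)).comp x
      (iteratedDeriv_zero (f := φ) ▸ hφk 0 (by norm_num) x hx)
  have e0 : EqOn (iteratedDeriv 0 (u ∘ φ)) (fun x ↦ iteratedDeriv 0 u (φ x)) J :=
    fun x _ ↦ by simp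
  have e1 : EqOn (iteratedDeriv 1 (u ∘ φ)) (fun x ↦ iteratedDeriv 1 u (φ x) * p 1 x) J :=
    fun x hx ↦ iteratedDeriv_succ_eq_of_eqOn hJ e0 hx (huk 0 (by norm_num) x hx)
  have e2 : EqOn (iteratedDeriv 2 (u ∘ φ))
      (fun x ↦ iteratedDeriv 2 u (φ x) * p 1 x ^ 2 + iteratedDeriv 1 u (φ x) * p 2 x) J :=
    fun x hx ↦ by
      rw [iteratedDeriv_succ_eq_of_eqOn hJ e1 hx
        ((huk 1 (by norm_num) x hx).mul (hφk 1 (by norm_num) x hx))]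
      ring
  have e3 : EqOn (iteratedDeriv 3 (u ∘ φ))
      (fun x ↦ iteratedDeriv 3 u (φ x) * p 1 x ^ 3 + 3 * iteratedDeriv 2 u (φ x) * p 1 x * p 2 x
        + iteratedDeriv 1 u (φ x) * p 3 x) J :=
    fun x hx ↦ by
      rw [iteratedDeriv_succ_eq_of_eqOn hJ e2 hx
        (((huk 2 (by norm_num) x hx).mul ((hφk 1 (by norm_num) x hx).pow 2)).add
          ((huk 1 (by norm_num) x hx).mul (hφk 2 (by norm_num) x hx)))]
      simp only [Pi.pow_apply, Nat.cast_ofNat]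
      ring
  have e4 : iteratedDeriv 4 (u ∘ φ) x = iteratedDeriv 4 u (φ x) * p 1 x ^ 4
      + 6 * iteratedDeriv 3 u (φ x) * p 1 x ^ 2 * p 2 x
      + iteratedDeriv 2 u (φ x) * (4 * p 1 x * p 3 x + 3 * p 2 x ^ 2)
      + iteratedDeriv 1 u (φ x) * p 4 x := by
    rw [iteratedDeriv_succ_eq_of_eqOn hJ e3 hx
      ((((huk 3 (by norm_num) x hx).mul ((hφk 1 (by norm_num) x hx).pow 3)).add
        ((((huk 2 (by norm_num) x hx).const_mul 3).mul (hφk 1 (by norm_num) x hx)).mul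
          (hφk 2 (by norm_num) x hx))).add
        ((huk 1 (by norm_num) x hx).mul (hφk 3 (by norm_num) x hx)))]
    simp only [Pi.pow_apply, Pi.mul_apply, Nat.cast_ofNat]
    ring
  simp only [linDiffOp, sum_range_succ, sum_range_zero, compCoeff, iteratedDeriv_zero,
    Function.comp_apply, e1 hx, e2 hx, e3 hx, e4, p]
  ring

def odeCoeff (c0 c1 c2 c3 : ℝ) : ℕ → ℝ
  | 0 => c0
  | 1 => c1
  | 2 => c2
  | 3 => c3
  | 4 => 1
  | _ => 0

/-- The coefficients `Tₖ(x)` of the module docstring. -/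
noncomputable def substCoeff (a : ℕ → ℝ) (φ ν : ℝ → ℝ) (x : ℝ) : ℕ → ℝ :=
  compCoeff (mulCoeff 4 a fun k ↦ iteratedDeriv k ν x) fun k ↦ iteratedDeriv k φ x

theorem linDiffOp_odeCoeff (c0 c1 c2 c3 : ℝ) (y : ℝ → ℝ) (x : ℝ) :
    linDiffOp 4 (odeCoeff c0 c1 c2 c3) y x = iteratedDeriv 4 y x + c3 * iteratedDeriv 3 y x
      + c2 * iteratedDeriv 2 y x + c1 * deriv y x + c0 * y x := by
  simp only [linDiffOp, odeCoeff, sum_range_succ, sum_range_zero, iteratedDeriv_zero,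
    iteratedDeriv_one]
  ring

theorem linDiffOp_eq_of_eqOn_comp_mul {J W : Set ℝ} (hJ : IsOpen J) (hW : IsOpen W)
    {φ ν u y : ℝ → ℝ} (hφ : ContDiffOn ℝ 4 φ J) (hν : ContDiffOn ℝ 4 ν J)
    (hu : ContDiffOn ℝ 4 u W) (hφW : MapsTo φ J W) (hy : EqOn y ((u ∘ φ) * ν) J) (a : ℕ → ℝ)
    {x : ℝ} (hx : x ∈ J) :
    linDiffOp 4 a y x = linDiffOp 4 (substCoeff a φ ν x) u (φ x) := by
  have hyx : y =ᶠ[𝓝 x] (u ∘ φ) * ν := eventually_of_mem (hJ.mem_nhds hx) hy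
  have huφ : ContDiffAt ℝ 4 (u ∘ φ) x :=
    (hu.contDiffAt (hW.mem_nhds (hφW hx))).comp x (hφ.contDiffAt (hJ.mem_nhds hx))
  rw [substCoeff, ← linDiffOp_comp hJ hW hφ hu hφW _ hx,
    ← linDiffOp_mul a huφ (hν.contDiffAt (hJ.mem_nhds hx))]
  simp only [linDiffOp, hyx.iteratedDeriv_eq]

theorem iteratedDeriv_four_add_eq_zero_of_linDiffOp_eq_zero {J W : Set ℝ} (hJ : IsOpen J)
    (hW : IsOpen W) {φ ν u y : ℝ → ℝ} (hφ : ContDiffOn ℝ 4 φ J) (hν : ContDiffOn ℝ 4 ν J)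
    (hu : ContDiffOn ℝ 4 u W) (hφW : MapsTo φ J W) (hy : EqOn y ((u ∘ φ) * ν) J) {a : ℕ → ℝ}
    {x : ℝ} (hx : x ∈ J) (hode : linDiffOp 4 a y x = 0) (h3 : substCoeff a φ ν x 3 = 0)
    (h2 : substCoeff a φ ν x 2 = 0) (h4 : substCoeff a φ ν x 4 ≠ 0) :
    iteratedDeriv 4 u (φ x) + substCoeff a φ ν x 1 / substCoeff a φ ν x 4 * deriv u (φ x)
      + substCoeff a φ ν x 0 / substCoeff a φ ν x 4 * u (φ x) = 0 := by
  rw [linDiffOp_eq_of_eqOn_comp_mul hJ hW hφ hν hu hφW hy a hx] at hode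
  simp only [linDiffOp, sum_range_succ, sum_range_zero, h3, h2, iteratedDeriv_zero,
    iteratedDeriv_one] at hode
  field_simp
  linear_combination hode

theorem substCoeff_odeCoeff_four (c0 c1 c2 c3 : ℝ) (φ ν : ℝ → ℝ) (x : ℝ) :
    substCoeff (odeCoeff c0 c1 c2 c3) φ ν x 4 = ν x * deriv φ x ^ 4 := by
  norm_num [substCoeff, compCoeff, mulCoeff, odeCoeff, sum_range_succ, Nat.choose]

theorem contDiffOn_substCoeff_odeCoeff {J : Set ℝ} (hJ : IsOpen J) {c0 c1 c2 c3 φ ν : ℝ → ℝ}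
    (hc0 : ContDiffOn ℝ ∞ c0 J) (hc1 : ContDiffOn ℝ ∞ c1 J) (hc2 : ContDiffOn ℝ ∞ c2 J)
    (hc3 : ContDiffOn ℝ ∞ c3 J) (hφ : ContDiffOn ℝ ∞ φ J) (hν : ContDiffOn ℝ ∞ ν J) (k : ℕ) :
    ContDiffOn ℝ ∞ (fun x ↦ substCoeff (odeCoeff (c0 x) (c1 x) (c2 x) (c3 x)) φ ν x k) J := by
  have hk : ∀ k : ℕ, (∞ : WithTop ℕ∞) + k ≤ ∞ := fun k ↦
    mod_cast le_of_eq (top_add (k : ℕ∞))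
  have hφk : ∀ k, ContDiffOn ℝ ∞ (iteratedDeriv k φ) J := fun k ↦
    hφ.iteratedDeriv_of_isOpen hJ k (hk k)
  have hνk : ∀ k, ContDiffOn ℝ ∞ (iteratedDeriv k ν) J := fun k ↦
    hν.iteratedDeriv_of_isOpen hJ k (hk k)
  rcases k with _ | _ | _ | _ | _ | k <;>
    simp only [substCoeff, compCoeff, mulCoeff, odeCoeff, sum_range_succ, sum_range_zero] <;>
    fun_prop

theorem substCoeff_three_eq_zero_and_two_eq_zero {J : Set ℝ} (hJ : IsOpen J)
    {w w' q K φ c3 : ℝ → ℝ} {c0 c1 c2 c3' x : ℝ} (hx : x ∈ J)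
    (hw : ∀ x ∈ J, HasDerivAt w (w' x) x) (hw' : HasDerivAt w' (q x * w x) x)
    (hw0 : ∀ x ∈ J, w x ≠ 0) (hK : ∀ x ∈ J, HasDerivAt K (-(c3 x / 4) * K x) x)
    (hc3 : HasDerivAt c3 c3' x) (hq : 80 * q x = 12 * c3' + 3 * c3 x ^ 2 - 8 * c2)
    (hφ : ∀ x ∈ J, HasDerivAt φ (w x ^ 2)⁻¹ x) :
    substCoeff (odeCoeff c0 c1 c2 (c3 x)) φ (fun x ↦ K x * w x ^ 3) x 3 = 0 ∧
      substCoeff (odeCoeff c0 c1 c2 (c3 x)) φ (fun x ↦ K x * w x ^ 3) x 2 = 0 := by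
  have φ1 : EqOn (iteratedDeriv 1 φ) (fun x ↦ (w x ^ 2)⁻¹) J := fun x hx ↦ by
    rw [iteratedDeriv_one]; exact (hφ x hx).deriv
  have φ2 : EqOn (iteratedDeriv 2 φ) (fun x ↦ -2 * w' x / w x ^ 3) J := fun x hx ↦ by
    rw [iteratedDeriv_succ_eq_of_eqOn hJ φ1 hx (((hw x hx).pow 2).inv (pow_ne_zero 2 (hw0 x hx)))]
    simp only [Pi.pow_apply]
    field_simp [hw0 x hx]
    ring
  have φ3 : iteratedDeriv 3 φ x = (6 * w' x ^ 2 - 2 * q x * w x ^ 2) / w x ^ 4 := by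
    rw [iteratedDeriv_succ_eq_of_eqOn hJ φ2 hx
      (((hw'.const_mul (-2)).div ((hw x hx).pow 3) (pow_ne_zero 3 (hw0 x hx))))]
    field_simp [hw0 x hx]
    ring
  have ν0 : EqOn (iteratedDeriv 0 fun x ↦ K x * w x ^ 3) (fun x ↦ K x * w x ^ 3) J :=
    fun x _ ↦ by simp
  have ν1 : EqOn (iteratedDeriv 1 fun x ↦ K x * w x ^ 3)
      (fun x ↦ K x * (3 * w x ^ 2 * w' x - c3 x * w x ^ 3 / 4)) J := fun x hx ↦ by
    rw [iteratedDeriv_succ_eq_of_eqOn hJ ν0 hx ((hK x hx).mul ((hw x hx).pow 3))]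
    push_cast
    ring
  have ν2 : iteratedDeriv 2 (fun x ↦ K x * w x ^ 3) x = _ := iteratedDeriv_succ_eq_of_eqOn hJ ν1 hx
    ((hK x hx).mul ((((hw x hx).pow 2).const_mul 3).mul hw' |>.sub
      ((hc3.mul ((hw x hx).pow 3)).div_const 4)))
  simp only [substCoeff, compCoeff, mulCoeff, odeCoeff, sum_range_succ, sum_range_zero,
    φ1 hx, φ2 hx, φ3, ν1 hx, ν2, Pi.pow_apply]
  norm_num [Nat.choose]
  constructor
  · field_simp [hw0 x hx]
    ring
  · -- `T₂ = K (8 c₂ - 3 c₃² + 80 q - 12 c₃') / (8 w)`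
    rw [show c2 = (12 * c3' + 3 * c3 x ^ 2 - 80 * q x) / 8 by linarith]
    field_simp [hw0 x hx]
    ring

theorem exists_substCoeff_three_eq_zero_and_two_eq_zero {I : Set ℝ} (hI : IsOpen I)
    (c0 c1 : ℝ → ℝ) {c2 c3 : ℝ → ℝ} (hc2 : ContDiffOn ℝ ∞ c2 I) (hc3 : ContDiffOn ℝ ∞ c3 I)
    {x0 : ℝ} (hx0 : x0 ∈ I) :
    ∃ J : Set ℝ, IsOpen J ∧ J.OrdConnected ∧ J ⊆ I ∧ x0 ∈ J ∧ ∃ φ ν : ℝ → ℝ,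
      ContDiffOn ℝ ∞ φ J ∧ ContDiffOn ℝ ∞ ν J ∧ (∀ x ∈ J, 0 < deriv φ x) ∧
      (∀ x ∈ J, ν x ≠ 0) ∧ ∀ x ∈ J,
        substCoeff (odeCoeff (c0 x) (c1 x) (c2 x) (c3 x)) φ ν x 3 = 0 ∧
        substCoeff (odeCoeff (c0 x) (c1 x) (c2 x) (c3 x)) φ ν x 2 = 0 := by
  have hc3' : ContDiffOn ℝ ∞ (deriv c3) I := hc3.deriv_of_isOpen hI le_rfl
  set q := fun x ↦ (12 * deriv c3 x + 3 * c3 x ^ 2 - 8 * c2 x) / 80 with hq_def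
  have hq : ContDiffOn ℝ ∞ q I := by fun_prop
  obtain ⟨w, w', hw_ev⟩ := exists_eventually_pos_hasDerivAt_linearODE2
    ((hq.contDiffAt (hI.mem_nhds hx0)).of_le (mod_cast le_top))
  obtain ⟨ε, hε, hball⟩ := Metric.eventually_nhds_iff_ball.mp (hw_ev.and (hI.mem_nhds hx0))
  have hJ : IsOpen (Metric.ball x0 ε) := Metric.isOpen_ball
  have hJI : Metric.ball x0 ε ⊆ I := fun x hx ↦ (hball x hx).2
  have hw := fun x hx ↦ (hball x hx).1
  have hwS : ContDiffOn ℝ ∞ w (Metric.ball x0 ε) :=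
    contDiffOn_of_hasDerivAt_linearODE2 hJ (hq.mono hJI) (fun x hx ↦ (hw x hx).2.1)
      fun x hx ↦ (hw x hx).2.2
  have hJc : (Metric.ball x0 ε).OrdConnected := by
    rw [Real.ball_eq_Ioo]; exact ordConnected_Ioo
  obtain ⟨C, hCS, hC⟩ := (hc3.mono hJI).exists_hasDerivAt hJ hJc
  obtain ⟨φ, hφS, hφ⟩ := ContDiffOn.exists_hasDerivAt hJ hJc (f := fun x ↦ (w x ^ 2)⁻¹)
    ((hwS.pow 2).inv fun x hx ↦ (pow_pos (hw x hx).1 2).ne')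
  refine ⟨_, hJ, hJc, hJI, Metric.mem_ball_self hε, φ, fun x ↦ Real.exp (-(C x / 4)) * w x ^ 3,
    hφS, by fun_prop, fun x hx ↦ ?_, fun x hx ↦ ?_, fun x hx ↦ ?_⟩
  · rw [(hφ x hx).deriv]; exact inv_pos.mpr (pow_pos (hw x hx).1 2)
  · exact mul_ne_zero (Real.exp_pos _).ne' (pow_pos (hw x hx).1 3).ne'
  · refine substCoeff_three_eq_zero_and_two_eq_zero hJ hx (fun x hx ↦ (hw x hx).2.1) (hw x hx).2.2
      (fun x hx ↦ (hw x hx).1.ne') (fun x hx ↦ ?_)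
      ((hc3.contDiffAt (hI.mem_nhds (hJI hx))).differentiableAt (by simp)).hasDerivAt
      (by rw [hq_def]; ring) hφ
    exact ((hC x hx).div_const 4).fun_neg.exp.congr_deriv (by ring)

theorem laguerre_form_local_general
    (I : Set ℝ) (hI : IsOpen I)
    (c0 c1 c2 c3 : ℝ → ℝ)
    (hc0 : ContDiffOn ℝ (⊤ : ℕ∞) c0 I) (hc1 : ContDiffOn ℝ (⊤ : ℕ∞) c1 I)
    (hc2 : ContDiffOn ℝ (⊤ : ℕ∞) c2 I) (hc3 : ContDiffOn ℝ (⊤ : ℕ∞) c3 I) :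
    ∀ x0 ∈ I, ∃ I0 : Set ℝ, IsOpen I0 ∧ I0.OrdConnected ∧ I0 ⊆ I ∧ x0 ∈ I0 ∧
      ∃ φ μ : ℝ → ℝ,
        ContDiffOn ℝ (⊤ : ℕ∞) φ I0 ∧ ContDiffOn ℝ (⊤ : ℕ∞) μ I0 ∧
        (∀ x ∈ I0, 0 < deriv φ x) ∧ (∀ x ∈ I0, μ x ≠ 0) ∧
        ∃ α β : ℝ → ℝ,
          ContDiffOn ℝ (⊤ : ℕ∞) α (φ '' I0) ∧ ContDiffOn ℝ (⊤ : ℕ∞) β (φ '' I0) ∧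
          ∀ y : ℝ → ℝ, ContDiffOn ℝ 4 y I0 →
            (∀ x ∈ I0, iteratedDeriv 4 y x + c3 x * iteratedDeriv 3 y x
              + c2 x * iteratedDeriv 2 y x + c1 x * deriv y x + c0 x * y x = 0) →
            ∀ (u : ℝ → ℝ) (W : Set ℝ), IsOpen W → (∀ x ∈ I0, φ x ∈ W) →
              ContDiffOn ℝ 4 u W → (∀ x ∈ I0, u (φ x) = μ x * y x) →
              ∀ x ∈ I0, iteratedDeriv 4 u (φ x) + α (φ x) * deriv u (φ x)
                + β (φ x) * u (φ x) = 0 := by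
  intro x0 hx0
  obtain ⟨J, hJ, hJc, hJI, hx0J, φ, ν, hφ, hν, hφ', hν0, hT32⟩ :=
    exists_substCoeff_three_eq_zero_and_two_eq_zero hI c0 c1 hc2 hc3 hx0
  set T := fun k x ↦ substCoeff (odeCoeff (c0 x) (c1 x) (c2 x) (c3 x)) φ ν x k
  have hT4 : ∀ x ∈ J, T 4 x ≠ 0 := fun x hx ↦ by
    simp only [T, substCoeff_odeCoeff_four]
    exact mul_ne_zero (hν0 x hx) (pow_pos (hφ' x hx) 4).ne'
  have hTS := contDiffOn_substCoeff_odeCoeff hJ (hc0.mono hJI) (hc1.mono hJI) (hc2.mono hJI)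
    (hc3.mono hJI) hφ hν
  have hinj : InjOn φ J := (strictMonoOn_of_deriv_pos hJc.convex hφ.continuousOn
    fun x hx ↦ hφ' x (interior_subset hx)).injOn
  have hψ := hφ.contDiffOn_invFunOn_image hJ (by simp) hinj fun x hx ↦ (hφ' x hx).ne'
  have hψJ : MapsTo (Function.invFunOn φ J) (φ '' J) J := fun _ ⟨x, hx, hxt⟩ ↦
    Function.invFunOn_mem ⟨x, hx, hxt⟩
  refine ⟨J, hJ, hJc, hJI, hx0J, φ, fun x ↦ (ν x)⁻¹, hφ, hν.inv hν0, hφ',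
    fun x hx ↦ inv_ne_zero (hν0 x hx), (fun x ↦ T 1 x / T 4 x) ∘ Function.invFunOn φ J,
    (fun x ↦ T 0 x / T 4 x) ∘ Function.invFunOn φ J,
    ((hTS 1).div (hTS 4) hT4).comp hψ hψJ, ((hTS 0).div (hTS 4) hT4).comp hψ hψJ, ?_⟩
  intro y _ hode u W hW hφW hu huy x hx
  have hy_eq : EqOn y ((u ∘ φ) * ν) J := fun x hx ↦ by
    simp only [Pi.mul_apply, Function.comp_apply, huy x hx]
    field_simp [hν0 x hx]
  simp only [Function.comp_apply, hinj.leftInvOn_invFunOn hx]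
  exact iteratedDeriv_four_add_eq_zero_of_linDiffOp_eq_zero hJ hW
    (hφ.of_le (WithTop.coe_le_coe.mpr le_top)) (hν.of_le (WithTop.coe_le_coe.mpr le_top)) hu hφW
    hy_eq hx ((linDiffOp_odeCoeff ..).trans (hode x hx)) (hT32 x hx).1 (hT32 x hx).2 (hT4 x hx)

/-- every linear fourth-order ODE can locally be brought to the Laguerre
form `u'''' + α(t)u' + β(t)u = 0` by a change of variables `t = φ(x)`, `u = μ(x)·y`. -/
theorem laguerre_form_local
    (I : Set ℝ) (hI : IsOpen I) (hIc : I.OrdConnected)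
    (c0 c1 c2 c3 : ℝ → ℝ)
    (hc0 : ContDiffOn ℝ (⊤ : ℕ∞) c0 I) (hc1 : ContDiffOn ℝ (⊤ : ℕ∞) c1 I)
    (hc2 : ContDiffOn ℝ (⊤ : ℕ∞) c2 I) (hc3 : ContDiffOn ℝ (⊤ : ℕ∞) c3 I) :
    ∀ x0 ∈ I, ∃ I0 : Set ℝ, IsOpen I0 ∧ I0.OrdConnected ∧ I0 ⊆ I ∧ x0 ∈ I0 ∧
      ∃ φ μ : ℝ → ℝ,
        ContDiffOn ℝ (⊤ : ℕ∞) φ I0 ∧ ContDiffOn ℝ (⊤ : ℕ∞) μ I0 ∧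
        (∀ x ∈ I0, 0 < deriv φ x) ∧ (∀ x ∈ I0, μ x ≠ 0) ∧
        ∃ α β : ℝ → ℝ,
          ContDiffOn ℝ (⊤ : ℕ∞) α (φ '' I0) ∧ ContDiffOn ℝ (⊤ : ℕ∞) β (φ '' I0) ∧
          ∀ y : ℝ → ℝ, ContDiffOn ℝ 4 y I0 →
            (∀ x ∈ I0, iteratedDeriv 4 y x + c3 x * iteratedDeriv 3 y x
              + c2 x * iteratedDeriv 2 y x + c1 x * deriv y x + c0 x * y x = 0) →
            ∀ (u : ℝ → ℝ) (W : Set ℝ), IsOpen W → (∀ x ∈ I0, φ x ∈ W) →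
              ContDiffOn ℝ 4 u W → (∀ x ∈ I0, u (φ x) = μ x * y x) →
              ∀ x ∈ I0, iteratedDeriv 4 u (φ x) + α (φ x) * deriv u (φ x)
                + β (φ x) * u (φ x) = 0 :=
  laguerre_form_local_general I hI c0 c1 c2 c3 hc0 hc1 hc2 hc3
end
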